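/- Let m ∈ ℤ and let δ(m) ∈ {0,1} denote the parity of m (δ(m) ≡ m mod 2). Then for every s ∈ ℂ with 2s ∉ ℤ one has i·G_m(s) = G_{δ(m)+1 mod 2}(s − |m|/2)·G_0(s + |m|/2) and i·G_m(s) = G_{δ(m)}(s − |m|/2)·G_1(s + |m|/2). -/
import Mathlib


open scoped Real

/-- The gamma factor `G_δ(s) = i^δ · π^{1/2−s} · Γ((s+δ)/2)/Γ((1−s+δ)/2)` for `δ ∈ ℤ/2ℤ`. -/
noncomputable def Gdelta (δ : ZMod 2) (s : ℂ) : ℂ :=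
  Complex.I ^ (δ.val) * (π : ℂ) ^ ((1 : ℂ) / 2 - s) *
    Complex.Gamma ((s + (δ.val : ℂ)) / 2) / Complex.Gamma ((1 - s + (δ.val : ℂ)) / 2)

/-- The gamma factor `G_m(s) = i^{|m|} · (2π)^{1−2s} · Γ(s+|m|/2)/Γ(1−s+|m|/2)` for `m ∈ ℤ`. -/
noncomputable def Gm (m : ℤ) (s : ℂ) : ℂ :=
  Complex.I ^ (m.natAbs) * (2 * (π : ℂ)) ^ (1 - 2 * s) *
    Complex.Gamma (s + (m.natAbs : ℂ) / 2) / Complex.Gamma (1 - s + (m.natAbs : ℂ) / 2)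



section helpers
variable {s : ℂ} (hs : ∀ k : ℤ, 2 * s ≠ (k : ℂ))

include hs

lemma gamma4 (z : ℂ) (a : ℤ) (h : 4*z = 2*s + a ∨ 4*z = a - 2*s) :
    Complex.Gamma z ≠ 0 := by
  apply Complex.Gamma_ne_zero
  intro j hj
  rcases h with h | h
  · apply hs (-4*j - a)
    rw [hj] at h
    push_cast
    linear_combination -h
  · apply hs (a + 4*j)
    rw [hj] at h
    push_cast
    linear_combination h

lemma sin4 (z : ℂ) (a : ℤ) (h : 4*z = 2*s + a ∨ 4*z = a - 2*s) :
    Complex.sin ((π:ℂ) * z) ≠ 0 := by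
  rw [Complex.sin_ne_zero_iff]
  intro j hj
  have hz : z = (j:ℂ) := by
    have hpi : (π:ℂ) ≠ 0 := Complex.ofReal_ne_zero.2 Real.pi_ne_zero
    exact mul_left_cancel₀ hpi (hj.trans (mul_comm _ _))
  rw [hz] at h
  rcases h with h | h
  · apply hs (4*j - a)
    push_cast
    linear_combination -h
  · apply hs (a - 4*j)
    push_cast
    linear_combination h

lemma sin2 (z : ℂ) (a : ℤ) (h : 2*z = 2*s + a ∨ 2*z = a - 2*s) :
    Complex.sin ((π:ℂ) * z) ≠ 0 := by
  rw [Complex.sin_ne_zero_iff]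
  intro j hj
  have hpi : (π:ℂ) ≠ 0 := Complex.ofReal_ne_zero.2 Real.pi_ne_zero
  have hz : z = (j:ℂ) := mul_left_cancel₀ hpi (hj.trans (mul_comm _ _))
  rw [hz] at h
  rcases h with h | h
  · apply hs (2*j - a)
    push_cast
    linear_combination -h
  · apply hs (a - 2*j)
    push_cast
    linear_combination h

lemma cos4 (z : ℂ) (a : ℤ) (h : 4*z = 2*s + a ∨ 4*z = a - 2*s) :
    Complex.cos ((π:ℂ) * z) ≠ 0 := by
  have : Complex.cos ((π:ℂ)*z) = Complex.sin ((π:ℂ) * (1/2 - z)) := by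
    rw [show (π:ℂ) * (1/2 - z) = π/2 - π*z by ring, Complex.sin_pi_div_two_sub]
  rw [this]
  apply sin4 hs (1/2 - z) (2 - a)
  rcases h with h | h
  · right; push_cast; linear_combination -h
  · left; push_cast; linear_combination -h

end helpers

-- product-to-sum
lemma p2s_sc (A B : ℂ) : Complex.sin A * Complex.cos B
    = (Complex.sin (A+B) + Complex.sin (A-B))/2 := by
  rw [Complex.sin_add, Complex.sin_sub]; ring

lemma p2s_cs (A B : ℂ) : Complex.cos A * Complex.sin B
    = (Complex.sin (A+B) - Complex.sin (A-B))/2 := by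
  rw [Complex.sin_add, Complex.sin_sub]; ring

lemma p2s_cc (A B : ℂ) : Complex.cos A * Complex.cos B
    = (Complex.cos (A-B) + Complex.cos (A+B))/2 := by
  rw [Complex.cos_add, Complex.cos_sub]; ring

lemma p2s_ss (A B : ℂ) : Complex.sin A * Complex.sin B
    = (Complex.cos (A-B) - Complex.cos (A+B))/2 := by
  rw [Complex.cos_add, Complex.cos_sub]; ring

-- assembly lemmas
lemma assemble1 (I' J T Q A B S T1 Q1 x T2 Q2 y e sig : ℂ)
    (r1 : S = e * sig) (r2 : J = e) (r3 : T1*T2 = 2*T) (r4 : Q1*Q2 = Q)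
    (r5 : x*y = sig/2) (r6 : e*e = 1) :
    I' * (J * (T * Q * A * B * S)) = (I' * (T1 * Q1 * B * x)) * (T2 * Q2 * A * y) := by
  subst r1 r2
  linear_combination I'*T*Q*A*B*sig*r6 - I'*B*x*A*y*Q1*Q2*r3 - 2*T*I'*B*x*A*y*r4
    - 2*T*Q*I'*A*B*r5

lemma assemble2 (I' J T Q A B S T1 Q1 x T2 Q2 y e sig : ℂ)
    (r1 : S = e * sig) (r2 : J = e) (r3 : T1*T2 = 2*T) (r4 : Q1*Q2 = Q)
    (r5 : x*y = sig/2) (r6 : e*e = 1) :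
    I' * (J * (T * Q * A * B * S)) = (T1 * Q1 * B * x) * (I' * (T2 * Q2 * A * y)) := by
  subst r1 r2
  linear_combination I'*T*Q*A*B*sig*r6 - I'*B*x*A*y*Q1*Q2*r3 - 2*T*I'*B*x*A*y*r4
    - 2*T*Q*I'*A*B*r5

lemma assemble3 (I' J T Q A B S T1 Q1 x T2 Q2 y e sig : ℂ)
    (r1 : S = -(e * sig)) (r2 : J = I' * e) (r3 : T1*T2 = 2*T) (r4 : Q1*Q2 = Q)
    (r5 : x*y = sig/2) (r6 : e*e = 1) (r0 : I'*I' = -1) :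
    I' * (J * (T * Q * A * B * S)) = (T1 * Q1 * B * x) * (T2 * Q2 * A * y) := by
  subst r1 r2
  linear_combination -T*Q*A*B*sig*e*e*r0 + T*Q*A*B*sig*r6
    - B*x*A*y*Q1*Q2*r3 - 2*T*B*x*A*y*r4 - 2*T*Q*A*B*r5

lemma assemble4 (I' J T Q A B S T1 Q1 x T2 Q2 y e sig : ℂ)
    (r1 : S = -(e * sig)) (r2 : J = I' * e) (r3 : T1*T2 = 2*T) (r4 : Q1*Q2 = Q)
    (r5 : x*y = -(sig/2)) (r6 : e*e = 1) (r0 : I'*I' = -1) :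
    I' * (J * (T * Q * A * B * S)) = (I' * (T1 * Q1 * B * x)) * (I' * (T2 * Q2 * A * y)) := by
  subst r1 r2
  linear_combination (-e*e*T*Q*A*B*sig - T1*T2*Q1*Q2*A*B*x*y)*r0 + T*Q*A*B*sig*r6
    + Q1*Q2*A*B*x*y*r3 + 2*T*A*B*x*y*r4 + 2*T*Q*A*B*r5


-- trig helpers
lemma cos_nat_pi (k : ℕ) : Complex.cos (k * (π:ℂ)) = (-1)^k := by
  induction k with
  | zero => simp
  | succ n ih =>
    push_cast
    rw [add_mul, one_mul, Complex.cos_add, Complex.cos_pi, Complex.sin_pi]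
    push_cast at ih
    rw [ih]; ring

lemma sin_nat_pi (k : ℕ) : Complex.sin (k * (π:ℂ)) = 0 := by
  induction k with
  | zero => simp
  | succ n ih =>
    push_cast
    rw [add_mul, one_mul, Complex.sin_add, Complex.cos_pi, Complex.sin_pi]
    push_cast at ih
    rw [ih]; ring

lemma sqrtpi : ((Real.sqrt π : ℝ) : ℂ) = (π:ℂ) ^ ((1:ℂ)/2) := by
  rw [show Real.sqrt π = π ^ ((1:ℝ)/2) from Real.sqrt_eq_rpow π,
    Complex.ofReal_cpow Real.pi_pos.le]
  norm_num

lemma dup (s : ℂ) : Complex.Gamma (s/2) * Complex.Gamma ((s+1)/2)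
    = Complex.Gamma s * (2:ℂ) ^ (1 - s) * (π:ℂ) ^ ((1:ℂ)/2) := by
  have := Complex.Gamma_mul_Gamma_add_half (s/2)
  rw [show s/2 + 1/2 = (s+1)/2 by ring, show 2 * (s/2) = s by ring] at this
  rw [this, sqrtpi]

lemma hpi0 : (π:ℂ) ≠ 0 := Complex.ofReal_ne_zero.2 Real.pi_ne_zero

lemma piPow (s : ℂ) : (π:ℂ)^((1:ℂ)/2-s) * (π:ℂ)^((1:ℂ)/2) = (π:ℂ)^(-s) * π := by
  rw [← Complex.cpow_add _ _ hpi0, show (1:ℂ)/2-s+1/2 = -s+1 by ring,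
    Complex.cpow_add _ _ hpi0, Complex.cpow_one]

lemma G0_eq (s : ℂ) (h1 : Complex.Gamma ((s+1)/2) ≠ 0) (hc : Complex.cos ((π:ℂ)*s/2) ≠ 0) :
    Gdelta 0 s = (2:ℂ)^(1-s) * (π:ℂ)^(-s) * Complex.Gamma s * Complex.cos ((π:ℂ)*s/2) := by
  have hre := Complex.Gamma_mul_Gamma_one_sub ((1-s)/2)
  rw [show (1:ℂ) - (1-s)/2 = (s+1)/2 by ring,
    show (π:ℂ) * ((1-s)/2) = π/2 - π*s/2 by ring, Complex.sin_pi_div_two_sub,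
    eq_div_iff hc] at hre
  have hne : Complex.Gamma ((1-s)/2) ≠ 0 := by
    intro h
    rw [h, zero_mul, zero_mul] at hre
    exact hpi0 hre.symm
  have hd := dup s
  simp only [Gdelta, ZMod.val_zero, pow_zero, Nat.cast_zero, add_zero, one_mul]
  rw [div_eq_iff hne]
  apply mul_right_cancel₀ h1
  linear_combination (π:ℂ)^((1:ℂ)/2-s) * hd
    - (2:ℂ)^(1-s) * (π:ℂ)^(-s) * Complex.Gamma s * hre
    + Complex.Gamma s * (2:ℂ)^(1-s) * piPow s

lemma G1_eq (s : ℂ) (h1 : Complex.Gamma (s/2) ≠ 0) (hc : Complex.sin ((π:ℂ)*s/2) ≠ 0) :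
    Gdelta 1 s = Complex.I * ((2:ℂ)^(1-s) * (π:ℂ)^(-s) * Complex.Gamma s
      * Complex.sin ((π:ℂ)*s/2)) := by
  have hre := Complex.Gamma_mul_Gamma_one_sub (s/2)
  rw [show (1:ℂ) - s/2 = (1-s+1)/2 by ring,
    show (π:ℂ) * (s/2) = π*s/2 by ring, eq_div_iff hc] at hre
  have hne : Complex.Gamma ((1-s+1)/2) ≠ 0 := by
    intro h
    rw [h, mul_zero, zero_mul] at hre
    exact hpi0 hre.symm
  have hd := dup s
  simp only [Gdelta, ZMod.val_one, pow_one, Nat.cast_one]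
  rw [div_eq_iff hne]
  apply mul_right_cancel₀ h1
  linear_combination Complex.I * (π:ℂ)^((1:ℂ)/2-s) * hd
    + Complex.I * Complex.Gamma s * (2:ℂ)^(1-s) * piPow s
    - Complex.I * (2:ℂ)^(1-s) * (π:ℂ)^(-s) * Complex.Gamma s * hre

lemma Gm_eq (m : ℤ) (s : ℂ)
    (hsin : Complex.sin ((π:ℂ)*(s - (m.natAbs:ℂ)/2)) ≠ 0) :
    Gm m s = Complex.I^(m.natAbs) * ((2:ℂ)^(1-2*s) * (π:ℂ)^(-(2*s))
      * Complex.Gamma (s + (m.natAbs:ℂ)/2) * Complex.Gamma (s - (m.natAbs:ℂ)/2)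
      * Complex.sin ((π:ℂ)*(s - (m.natAbs:ℂ)/2))) := by
  set c : ℂ := (m.natAbs:ℂ)/2 with hcdef
  have hre := Complex.Gamma_mul_Gamma_one_sub (s - c)
  rw [show (1:ℂ) - (s - c) = 1 - s + c by ring, eq_div_iff hsin] at hre
  have hne : Complex.Gamma (1 - s + c) ≠ 0 := by
    intro h
    rw [h, mul_zero, zero_mul] at hre
    exact hpi0 hre.symm
  have hsplit : (2 * (π:ℂ))^(1-2*s) = (2:ℂ)^(1-2*s) * (π:ℂ)^(1-2*s) := by
    rw [show (2:ℂ) = ((2:ℝ):ℂ) by norm_num]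
    exact Complex.mul_cpow_ofReal_nonneg (by norm_num) Real.pi_pos.le _
  have hpp : (π:ℂ)^(1-2*s) = (π:ℂ)^(-(2*s)) * π := by
    rw [show (1:ℂ)-2*s = -(2*s)+1 by ring, Complex.cpow_add _ _ hpi0, Complex.cpow_one]
  simp only [Gm]
  rw [div_eq_iff hne]
  linear_combination Complex.I^(m.natAbs) * Complex.Gamma (s + c) * hsplit
    + Complex.I^(m.natAbs) * Complex.Gamma (s + c) * (2:ℂ)^(1-2*s) * hpp
    - Complex.I^(m.natAbs) * (2:ℂ)^(1-2*s) * (π:ℂ)^(-(2*s)) * Complex.Gamma (s + c) * hre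

/-- For `m ∈ ℤ` and `s ∈ ℂ` with `2s ∉ ℤ`,
`i·G_m(s) = G_{δ(m)+1}(s − |m|/2)·G_0(s + |m|/2)` and
`i·G_m(s) = G_{δ(m)}(s − |m|/2)·G_1(s + |m|/2)`, where `δ(m) ≡ m (mod 2)`. -/
theorem stmt_1 (m : ℤ) (s : ℂ) (hs : ∀ k : ℤ, 2 * s ≠ (k : ℂ)) :
    Complex.I * Gm m s
        = Gdelta ((m : ZMod 2) + 1) (s - (m.natAbs : ℂ) / 2) *
            Gdelta 0 (s + (m.natAbs : ℂ) / 2) ∧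
      Complex.I * Gm m s
        = Gdelta (m : ZMod 2) (s - (m.natAbs : ℂ) / 2) *
            Gdelta 1 (s + (m.natAbs : ℂ) / 2) := by

  have hmn : (m : ZMod 2) = (m.natAbs : ZMod 2) := by
    rcases Int.natAbs_eq m with h | h
    · conv_lhs => rw [h]
      rw [Int.cast_natCast]
    · conv_lhs => rw [h]
      rw [Int.cast_neg, Int.cast_natCast, CharTwo.neg_eq]
  set n : ℕ := m.natAbs with hn
  -- nonvanishing facts
  have hsinU : Complex.sin ((π:ℂ)*(s - (n:ℂ)/2)) ≠ 0 := by
    apply sin2 hs _ (-(n:ℤ)); left; push_cast; ring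
  have hGu2 : Complex.Gamma ((s - (n:ℂ)/2)/2) ≠ 0 := by
    apply gamma4 hs _ (-(n:ℤ)); left; push_cast; ring
  have hGv2 : Complex.Gamma ((s + (n:ℂ)/2)/2) ≠ 0 := by
    apply gamma4 hs _ ((n:ℤ)); left; push_cast; ring
  have hGu1 : Complex.Gamma (((s - (n:ℂ)/2)+1)/2) ≠ 0 := by
    apply gamma4 hs _ (2-(n:ℤ)); left; push_cast; ring
  have hGv1 : Complex.Gamma (((s + (n:ℂ)/2)+1)/2) ≠ 0 := by
    apply gamma4 hs _ (2+(n:ℤ)); left; push_cast; ring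
  have hsinu : Complex.sin ((π:ℂ)*(s - (n:ℂ)/2)/2) ≠ 0 := by
    rw [show (π:ℂ)*(s - (n:ℂ)/2)/2 = π * ((s - (n:ℂ)/2)/2) by ring]
    apply sin4 hs _ (-(n:ℤ)); left; push_cast; ring
  have hsinv : Complex.sin ((π:ℂ)*(s + (n:ℂ)/2)/2) ≠ 0 := by
    rw [show (π:ℂ)*(s + (n:ℂ)/2)/2 = π * ((s + (n:ℂ)/2)/2) by ring]
    apply sin4 hs _ ((n:ℤ)); left; push_cast; ring
  have hcosu : Complex.cos ((π:ℂ)*(s - (n:ℂ)/2)/2) ≠ 0 := by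
    rw [show (π:ℂ)*(s - (n:ℂ)/2)/2 = π * ((s - (n:ℂ)/2)/2) by ring]
    apply cos4 hs _ (-(n:ℤ)); left; push_cast; ring
  have hcosv : Complex.cos ((π:ℂ)*(s + (n:ℂ)/2)/2) ≠ 0 := by
    rw [show (π:ℂ)*(s + (n:ℂ)/2)/2 = π * ((s + (n:ℂ)/2)/2) by ring]
    apply cos4 hs _ ((n:ℤ)); left; push_cast; ring
  -- power facts
  have hP2 : (2:ℂ)^(1-(s-(n:ℂ)/2)) * (2:ℂ)^(1-(s+(n:ℂ)/2)) = 2 * (2:ℂ)^(1-2*s) := by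
    rw [← Complex.cpow_add _ _ two_ne_zero,
      show (1-(s-(n:ℂ)/2))+(1-(s+(n:ℂ)/2)) = 1 + (1-2*s) by ring,
      Complex.cpow_add _ _ two_ne_zero, Complex.cpow_one]
  have hpi : (π:ℂ) ≠ 0 := Complex.ofReal_ne_zero.2 Real.pi_ne_zero
  have hPpi : (π:ℂ)^(-(s-(n:ℂ)/2)) * (π:ℂ)^(-(s+(n:ℂ)/2)) = (π:ℂ)^(-(2*s)) := by
    rw [← Complex.cpow_add _ _ hpi]
    congr 1; ring
  rcases Nat.even_or_odd n with ⟨k, hk⟩ | ⟨k, hk⟩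
  · -- n even, n = k + k
    have hδ : (m : ZMod 2) = 0 := by
      rw [hmn, hk]; push_cast; exact CharTwo.add_self_eq_zero _
    have hC : (n:ℂ) = 2*(k:ℂ) := by rw [hk]; push_cast; ring
    have r1 : Complex.sin ((π:ℂ)*(s - (n:ℂ)/2)) = (-1)^k * Complex.sin ((π:ℂ)*s) := by
      rw [hC, show (π:ℂ)*(s - 2*(k:ℂ)/2) = π*s - (k:ℂ)*π by ring, Complex.sin_sub,
        sin_nat_pi, cos_nat_pi]
      ring
    have r2 : Complex.I^n = ((-1:ℂ))^k := by
      rw [hk, pow_add, ← mul_pow, Complex.I_mul_I]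
    have r6 : ((-1:ℂ))^k * ((-1:ℂ))^k = 1 := by
      rw [← mul_pow]; norm_num
    constructor
    · rw [hδ, zero_add, Gm_eq m s (by rw [← hn]; exact hsinU),
        G1_eq _ hGu2 hsinu, G0_eq _ hGv1 hcosv, ← hn]
      refine assemble1 _ _ _ _ _ _ _ _ _ _ _ _ _ _ _ r1 r2 hP2 hPpi ?_ r6
      rw [show (π:ℂ)*(s - (n:ℂ)/2)/2 = π*(s - (n:ℂ)/2)/2 by ring, p2s_sc,
        show (π:ℂ)*(s-(n:ℂ)/2)/2 + (π:ℂ)*(s+(n:ℂ)/2)/2 = π*s by ring,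
        show (π:ℂ)*(s-(n:ℂ)/2)/2 - (π:ℂ)*(s+(n:ℂ)/2)/2 = -((k:ℂ)*π) by rw [hC]; ring,
        Complex.sin_neg, sin_nat_pi]
      ring
    · rw [hδ, Gm_eq m s (by rw [← hn]; exact hsinU),
        G0_eq _ hGu1 hcosu, G1_eq _ hGv2 hsinv, ← hn]
      refine assemble2 _ _ _ _ _ _ _ _ _ _ _ _ _ _ _ r1 r2 hP2 hPpi ?_ r6
      rw [p2s_cs,
        show (π:ℂ)*(s-(n:ℂ)/2)/2 + (π:ℂ)*(s+(n:ℂ)/2)/2 = π*s by ring,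
        show (π:ℂ)*(s-(n:ℂ)/2)/2 - (π:ℂ)*(s+(n:ℂ)/2)/2 = -((k:ℂ)*π) by rw [hC]; ring,
        Complex.sin_neg, sin_nat_pi]
      ring
  · -- n odd, n = 2k+1
    have hδ : (m : ZMod 2) = 1 := by
      rw [hmn, hk]; push_cast; rw [show (2:ZMod 2) = 0 by decide, zero_mul, zero_add]
    have hC : (n:ℂ) = 2*(k:ℂ)+1 := by rw [hk]; push_cast; ring
    have r1 : Complex.sin ((π:ℂ)*(s - (n:ℂ)/2))
        = -(((-1:ℂ))^k * Complex.cos ((π:ℂ)*s)) := by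
      rw [hC, show (π:ℂ)*(s - (2*(k:ℂ)+1)/2) = (π*s - (k:ℂ)*π) - π/2 by ring,
        Complex.sin_sub, Complex.cos_pi_div_two, Complex.sin_pi_div_two,
        Complex.cos_sub, sin_nat_pi, cos_nat_pi]
      ring
    have r2 : Complex.I^n = Complex.I * ((-1:ℂ))^k := by
      rw [hk, pow_succ, pow_mul, Complex.I_sq, mul_comm]
    have r6 : ((-1:ℂ))^k * ((-1:ℂ))^k = 1 := by
      rw [← mul_pow]; norm_num
    have hchalf : Complex.cos (-((π:ℂ)*((k:ℂ)+1/2))) = 0 := by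
      rw [Complex.cos_neg, show (π:ℂ)*((k:ℂ)+1/2) = (k:ℂ)*π + π/2 by ring,
        Complex.cos_add, Complex.cos_pi_div_two, Complex.sin_pi_div_two,
        sin_nat_pi, cos_nat_pi]
      ring
    constructor
    · rw [hδ, show (1 : ZMod 2) + 1 = 0 by decide, Gm_eq m s (by rw [← hn]; exact hsinU),
        G0_eq _ hGu1 hcosu, G0_eq _ hGv1 hcosv, ← hn]
      refine assemble3 _ _ _ _ _ _ _ _ _ _ _ _ _ _ _ r1 r2 hP2 hPpi ?_ r6 Complex.I_mul_I
      rw [p2s_cc,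
        show (π:ℂ)*(s-(n:ℂ)/2)/2 - (π:ℂ)*(s+(n:ℂ)/2)/2 = -((π:ℂ)*((k:ℂ)+1/2)) by
          rw [hC]; ring,
        show (π:ℂ)*(s-(n:ℂ)/2)/2 + (π:ℂ)*(s+(n:ℂ)/2)/2 = π*s by ring, hchalf]
      ring
    · rw [hδ, Gm_eq m s (by rw [← hn]; exact hsinU),
        G1_eq _ hGu2 hsinu, G1_eq _ hGv2 hsinv, ← hn]
      refine assemble4 _ _ _ _ _ _ _ _ _ _ _ _ _ _ _ r1 r2 hP2 hPpi ?_ r6 Complex.I_mul_I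
      rw [p2s_ss,
        show (π:ℂ)*(s-(n:ℂ)/2)/2 - (π:ℂ)*(s+(n:ℂ)/2)/2 = -((π:ℂ)*((k:ℂ)+1/2)) by
          rw [hC]; ring,
        show (π:ℂ)*(s-(n:ℂ)/2)/2 + (π:ℂ)*(s+(n:ℂ)/2)/2 = π*s by ring, hchalf]
      ring
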